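/- Let 0 < φ < π/4 and let Γ be an interior segment barrier for the unit square U = [0,1]² (a segment barrier whose union is contained in U). Let X be the subfamily of segments making angle at most φ with the x-axis (|(b − a)₂| ≤ sin φ · ‖b − a‖), Y the subfamily of segments making angle at most φ with the y-axis (|(b − a)₁| ≤ sin φ · ‖b − a‖), and Z the remaining segments, with |X|, |Y|, |Z| the corresponding sums of segment lengths. Then (|X| + |Y|) · √2 + |Z| · √2 · cos φ ≥ 2√2. -/

import Mathlib

/-!
Project onto the two diagonal directions of `U`. The lines `x + y = t` (`0 ≤ t ≤ 2`) and
`x - y = t` (`-1 ≤ t ≤ 1`) all meet `U`, hence the barrier, so the images of the barrier under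
`x + y` and under `x - y` each cover an interval of length `2`. A segment with displacement
`(u, v)` has images of lengths `|u + v|` and `|u - v|`, which add up to `2 max(|u|, |v|)`; hence
`∑ max(|uᵢ|, |vᵢ|) ≥ 2`. Finally `max(|u|, |v|)` is at most the length of the segment, and at most
`cos φ` times it when the segment makes an angle larger than `φ` with both axes.
-/

open MeasureTheory Set

noncomputable section

/-- A point in the plane. -/
abbrev Pt : Type := EuclideanSpace ℝ (Fin 2)

/-- A line in ℝ² is a set {p + t • v : t ∈ ℝ} for some p, v with v ≠ 0. -/
def IsLine (l : Set Pt) : Prop :=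
  ∃ p v : Pt, v ≠ 0 ∧ l = {q : Pt | ∃ t : ℝ, q = p + t • v}

/-- Γ is a barrier (opaque set) for C if every line meeting C also meets Γ. -/
def IsBarrier (Γ C : Set Pt) : Prop :=
  ∀ l : Set Pt, IsLine l → (l ∩ C).Nonempty → (l ∩ Γ).Nonempty

/-- The closed unit square U = [0,1] × [0,1]. -/
def unitSquare : Set Pt := {p : Pt | p 0 ∈ Icc (0:ℝ) 1 ∧ p 1 ∈ Icc (0:ℝ) 1}

/-- A segment [a, b] makes angle at most φ with the x-axis: |(b − a)₂| ≤ sin φ · ‖b − a‖. -/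
def NearHorizontal (φ : ℝ) (a b : Pt) : Prop := |(b - a) 1| ≤ Real.sin φ * ‖b - a‖

/-- A segment [a, b] makes angle at most φ with the y-axis: |(b − a)₁| ≤ sin φ · ‖b − a‖. -/
def NearVertical (φ : ℝ) (a b : Pt) : Prop := |(b - a) 0| ≤ Real.sin φ * ‖b - a‖

theorem sub_le_tsum_of_Icc_subset_iUnion_uIcc {ι : Type*} [Countable ι] {r s : ℝ} {x y : ι → ℝ}
    (hcov : Icc r s ⊆ ⋃ i, uIcc (x i) (y i)) (hs : Summable fun i => |y i - x i|) :
    s - r ≤ ∑' i, |y i - x i| := by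
  have hvol : ENNReal.ofReal (s - r) ≤ ∑' i, ENNReal.ofReal |y i - x i| :=
    calc ENNReal.ofReal (s - r) = volume (Icc r s) := Real.volume_Icc.symm
    _ ≤ volume (⋃ i, uIcc (x i) (y i)) := measure_mono hcov
    _ ≤ ∑' i, volume (uIcc (x i) (y i)) := measure_iUnion_le _
    _ = ∑' i, ENNReal.ofReal |y i - x i| := by simp only [Real.volume_interval]
  rwa [← ENNReal.ofReal_tsum_of_nonneg (fun _ => abs_nonneg _) hs,
    ENNReal.ofReal_le_ofReal_iff (tsum_nonneg fun _ => abs_nonneg _)] at hvol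

theorem LinearMap.image_iUnion_segment {E : Type*} [AddCommGroup E] [Module ℝ E] {ι : Type*}
    (f : E →ₗ[ℝ] ℝ) (a b : ι → E) :
    f '' ⋃ i, segment ℝ (a i) (b i) = ⋃ i, uIcc (f (a i)) (f (b i)) := by
  simp only [image_iUnion, ← segment_eq_uIcc]
  exact iUnion_congr fun i => image_segment ℝ f.toAffineMap (a i) (b i)

theorem IsBarrier.image_subset_image {Γ C : Set Pt} (h : IsBarrier Γ C) (f : Pt →ₗ[ℝ] ℝ)
    {v : Pt} (hv : v ≠ 0) (hfv : f v = 0) : f '' C ⊆ f '' Γ := by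
  rintro _ ⟨p, hpC, rfl⟩
  obtain ⟨q, ⟨t, rfl⟩, hqΓ⟩ := h _ ⟨p, v, hv, rfl⟩ ⟨p, ⟨0, by simp⟩, hpC⟩
  exact ⟨_, hqΓ, by simp [hfv]⟩

theorem ContinuousLinearMap.summable_abs_apply {ι E : Type*} [SeminormedAddCommGroup E]
    [NormedSpace ℝ E] (f : E →L[ℝ] ℝ) {x : ι → E} (hx : Summable fun i => ‖x i‖) :
    Summable fun i => |f (x i)| :=
  (hx.mul_left ‖f‖).of_nonneg_of_le (fun _ => abs_nonneg _) fun _ => f.le_opNorm _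

theorem IsBarrier.sub_le_tsum_abs_map_sub {C : Set Pt} {a b : ℕ → Pt}
    (hbar : IsBarrier (⋃ i, segment ℝ (a i) (b i)) C) (hsum : Summable fun i => ‖b i - a i‖)
    (f : Pt →L[ℝ] ℝ) {v : Pt} (hv : v ≠ 0) (hfv : f v = 0) {r s : ℝ}
    (hrs : Icc r s ⊆ f '' C) :
    s - r ≤ ∑' i, |f (b i - a i)| := by
  have hcov : Icc r s ⊆ ⋃ i, uIcc (f (a i)) (f (b i)) :=
    (hrs.trans (hbar.image_subset_image f.toLinearMap hv hfv)).trans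
      (f.toLinearMap.image_iUnion_segment a b).subset
  have hsum_map : Summable fun i => |f (b i) - f (a i)| := by
    simpa only [map_sub] using f.summable_abs_apply hsum
  simpa only [map_sub] using sub_le_tsum_of_Icc_subset_iUnion_uIcc hcov hsum_map

def diagSum : Pt →L[ℝ] ℝ := EuclideanSpace.proj 0 + EuclideanSpace.proj 1

def diagDiff : Pt →L[ℝ] ℝ := EuclideanSpace.proj 0 - EuclideanSpace.proj 1

@[simp] theorem diagSum_apply (p : Pt) : diagSum p = p 0 + p 1 := rfl

@[simp] theorem diagDiff_apply (p : Pt) : diagDiff p = p 0 - p 1 := rfl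

theorem Icc_subset_diagSum_image_unitSquare : Icc 0 2 ⊆ diagSum '' unitSquare := by
  rintro t ⟨ht0, ht2⟩
  refine ⟨!₂[t / 2, t / 2], ?_, by simp⟩
  simp [unitSquare]
  constructor <;> linarith

theorem Icc_subset_diagDiff_image_unitSquare : Icc (-1) 1 ⊆ diagDiff '' unitSquare := by
  rintro t ⟨ht0, ht1⟩
  refine ⟨!₂[(1 + t) / 2, (1 - t) / 2], ?_, by simp; ring⟩
  simp [unitSquare]
  constructor <;> constructor <;> linarith

theorem abs_add_add_abs_sub_eq_two_mul_max_abs (x y : ℝ) :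
    |x + y| + |x - y| = 2 * max |x| |y| := by
  rcases abs_cases x with ⟨_, _⟩ | ⟨_, _⟩ <;> rcases abs_cases y with ⟨_, _⟩ | ⟨_, _⟩ <;>
    rcases abs_cases (x + y) with ⟨_, _⟩ | ⟨_, _⟩ <;>
    rcases abs_cases (x - y) with ⟨_, _⟩ | ⟨_, _⟩ <;>
    rcases max_cases |x| |y| with ⟨_, _⟩ | ⟨_, _⟩ <;>
    linarith

theorem max_abs_le_norm (x : Pt) : max |x 0| |x 1| ≤ ‖x‖ :=
  max_le (PiLp.norm_apply_le x 0) (PiLp.norm_apply_le x 1)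

theorem summable_max_abs_of_summable_norm {ι : Type*} {x : ι → Pt}
    (hx : Summable fun i => ‖x i‖) : Summable fun i => max |x i 0| |x i 1| :=
  hx.of_nonneg_of_le (fun _ => (abs_nonneg _).trans (le_max_left _ _)) fun _ => max_abs_le_norm _

theorem IsBarrier.two_le_tsum_max_abs {a b : ℕ → Pt}
    (hbar : IsBarrier (⋃ i, segment ℝ (a i) (b i)) unitSquare)
    (hsum : Summable fun i => ‖b i - a i‖) :
    2 ≤ ∑' i, max |(b i - a i) 0| |(b i - a i) 1| := by
  have hsum_diag := hbar.sub_le_tsum_abs_map_sub hsum diagSum (v := !₂[1, -1]) (by simp)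
    (by simp) Icc_subset_diagSum_image_unitSquare
  have hdiff_diag := hbar.sub_le_tsum_abs_map_sub hsum diagDiff (v := !₂[1, 1]) (by simp)
    (by simp) Icc_subset_diagDiff_image_unitSquare
  simp only [diagSum_apply, diagDiff_apply] at hsum_diag hdiff_diag
  have hsplit := (diagSum.summable_abs_apply hsum).tsum_add (diagDiff.summable_abs_apply hsum)
  simp only [diagSum_apply, diagDiff_apply, abs_add_add_abs_sub_eq_two_mul_max_abs,
    tsum_mul_left] at hsplit
  linarith

theorem sq_add_sq_eq_norm_sq (x : Pt) : x 0 ^ 2 + x 1 ^ 2 = ‖x‖ ^ 2 := by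
  simp [EuclideanSpace.norm_sq_eq, Fin.sum_univ_two]

theorem abs_le_cos_mul_of_sin_mul_lt_abs {x y r φ : ℝ} (hxy : x ^ 2 + y ^ 2 = r ^ 2) (hr : 0 ≤ r)
    (hs : 0 ≤ Real.sin φ) (hc : 0 ≤ Real.cos φ) (h : Real.sin φ * r < |y|) :
    |x| ≤ Real.cos φ * r := by
  have hy : (Real.sin φ * r) ^ 2 ≤ y ^ 2 := by
    rw [← sq_abs y]
    exact pow_le_pow_left₀ (by positivity) h.le 2
  refine abs_le_of_sq_le_sq ?_ (by positivity)
  nlinarith [Real.sin_sq_add_cos_sq φ]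

theorem max_abs_le_cos_mul_norm {φ : ℝ} (hφ0 : 0 ≤ φ) (hφ1 : φ ≤ Real.pi / 2) {a b : Pt}
    (hH : ¬NearHorizontal φ a b) (hV : ¬NearVertical φ a b) :
    max |(b - a) 0| |(b - a) 1| ≤ Real.cos φ * ‖b - a‖ := by
  have hs : 0 ≤ Real.sin φ := Real.sin_nonneg_of_nonneg_of_le_pi hφ0 (by linarith [Real.pi_pos])
  have hc : 0 ≤ Real.cos φ := Real.cos_nonneg_of_mem_Icc ⟨by linarith [Real.pi_pos], hφ1⟩
  have hnorm := sq_add_sq_eq_norm_sq (b - a)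
  rw [NearHorizontal, not_le] at hH
  rw [NearVertical, not_le] at hV
  exact max_le (abs_le_cos_mul_of_sin_mul_lt_abs hnorm (norm_nonneg _) hs hc hH)
    (abs_le_cos_mul_of_sin_mul_lt_abs (by linarith) (norm_nonneg _) hs hc hV)

theorem tsum_le_tsum_subtype_add_add_mul {ι : Type*} {m ℓ : ι → ℝ} {X Y Z : Set ι} {c : ℝ}
    (hm : Summable m) (hℓ : Summable ℓ)
    (h : ∀ i, m i ≤ X.indicator ℓ i + Y.indicator ℓ i + c * Z.indicator ℓ i) :
    ∑' i, m i ≤ ∑' i : X, ℓ i + ∑' i : Y, ℓ i + c * ∑' i : Z, ℓ i := by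
  rw [tsum_subtype, tsum_subtype, tsum_subtype, ← tsum_mul_left,
    ← (hℓ.indicator X).tsum_add (hℓ.indicator Y),
    ← ((hℓ.indicator X).add (hℓ.indicator Y)).tsum_add ((hℓ.indicator Z).mul_left c)]
  exact hm.tsum_le_tsum h (((hℓ.indicator X).add (hℓ.indicator Y)).add
    ((hℓ.indicator Z).mul_left c))

theorem max_abs_le_indicator_add_add_mul {φ : ℝ} (hφ0 : 0 ≤ φ) (hφ1 : φ ≤ Real.pi / 2)
    (a b : ℕ → Pt) (i : ℕ) :
    max |(b i - a i) 0| |(b i - a i) 1| ≤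
      {j | NearHorizontal φ (a j) (b j)}.indicator (fun j => ‖b j - a j‖) i +
      {j | NearVertical φ (a j) (b j)}.indicator (fun j => ‖b j - a j‖) i +
      Real.cos φ * {j | ¬NearHorizontal φ (a j) (b j) ∧ ¬NearVertical φ (a j) (b j)}.indicator
        (fun j => ‖b j - a j‖) i := by
  set X := {j | NearHorizontal φ (a j) (b j)}
  set Y := {j | NearVertical φ (a j) (b j)}
  set Z := {j | ¬NearHorizontal φ (a j) (b j) ∧ ¬NearVertical φ (a j) (b j)}
  have hX := indicator_nonneg (s := X) (fun j _ => norm_nonneg (b j - a j)) i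
  have hY := indicator_nonneg (s := Y) (fun j _ => norm_nonneg (b j - a j)) i
  have hm := max_abs_le_norm (b i - a i)
  by_cases hH : i ∈ X
  · rw [indicator_of_mem hH, indicator_of_notMem fun h : i ∈ Z => h.1 hH]
    linarith
  by_cases hV : i ∈ Y
  · rw [indicator_of_mem hV, indicator_of_notMem fun h : i ∈ Z => h.2 hV]
    linarith
  rw [indicator_of_notMem hH, indicator_of_notMem hV, indicator_of_mem (show i ∈ Z from ⟨hH, hV⟩)]
  linarith [max_abs_le_cos_mul_norm hφ0 hφ1 hH hV]

theorem interior_barrier_diagonal_projection_inequality_general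
    (φ : ℝ) (hφ0 : 0 < φ) (hφ1 : φ < Real.pi / 4)
    (a b : ℕ → Pt)
    (hbar : IsBarrier (⋃ i, segment ℝ (a i) (b i)) unitSquare)
    (hsum : Summable fun i => ‖b i - a i‖) :
    2 * Real.sqrt 2 ≤ ((∑' i : {j : ℕ // NearHorizontal φ (a j) (b j)}, ‖b i.1 - a i.1‖) +
          ∑' i : {j : ℕ // NearVertical φ (a j) (b j)}, ‖b i.1 - a i.1‖) * Real.sqrt 2 +
        (∑' i : {j : ℕ // ¬ NearHorizontal φ (a j) (b j) ∧ ¬ NearVertical φ (a j) (b j)},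
          ‖b i.1 - a i.1‖) * (Real.sqrt 2 * Real.cos φ) := by
  have hφπ : φ ≤ Real.pi / 2 := by linarith [Real.pi_pos]
  have htwo : 2 ≤ (∑' i : {j : ℕ // NearHorizontal φ (a j) (b j)}, ‖b i.1 - a i.1‖) +
      (∑' i : {j : ℕ // NearVertical φ (a j) (b j)}, ‖b i.1 - a i.1‖) +
      Real.cos φ * ∑' i : {j : ℕ // ¬ NearHorizontal φ (a j) (b j) ∧ ¬ NearVertical φ (a j) (b j)},
        ‖b i.1 - a i.1‖ :=
    (hbar.two_le_tsum_max_abs hsum).trans <| tsum_le_tsum_subtype_add_add_mul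
      (summable_max_abs_of_summable_norm hsum) hsum
      (max_abs_le_indicator_add_add_mul hφ0.le hφπ a b)
  linarith [mul_le_mul_of_nonneg_right htwo (Real.sqrt_nonneg 2)]

/-- for an interior segment barrier of the unit square, partitioned into
near horizontal segments X, near vertical segments Y and remaining segments Z
(with respect to an angle 0 < φ < π/4), one has
(|X| + |Y|)·√2 + |Z|·√2·cos φ ≥ 2√2. -/
theorem interior_barrier_diagonal_projection_inequality
    (φ : ℝ) (hφ0 : 0 < φ) (hφ1 : φ < Real.pi / 4)
    (a b : ℕ → Pt) (hab : ∀ i, a i ≠ b i)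
    (hbar : IsBarrier (⋃ i, segment ℝ (a i) (b i)) unitSquare)
    (hint : (⋃ i, segment ℝ (a i) (b i)) ⊆ unitSquare)
    (hsum : Summable fun i => ‖b i - a i‖) :
    2 * Real.sqrt 2 ≤ ((∑' i : {j : ℕ // NearHorizontal φ (a j) (b j)}, ‖b i.1 - a i.1‖) +
          ∑' i : {j : ℕ // NearVertical φ (a j) (b j)}, ‖b i.1 - a i.1‖) * Real.sqrt 2 +
        (∑' i : {j : ℕ // ¬ NearHorizontal φ (a j) (b j) ∧ ¬ NearVertical φ (a j) (b j)},
          ‖b i.1 - a i.1‖) * (Real.sqrt 2 * Real.cos φ) :=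
  interior_barrier_diagonal_projection_inequality_general φ hφ0 hφ1 a b hbar hsum
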